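/- arXiv:2307.02793 — 3 statements merged into one kernel-verified Lean document; each statement's English description precedes it below -/
import Mathlib

section
/- For the mixture measure μ(η₁) = (1/(ρ_B - ρ_A)) ∫_{ρ_A}^{ρ_B} G_m(η₁) dm with 0 < ρ_A < ρ_B, the generating function identity Σ_{η₁=0}^∞ λ^{η₁} μ(η₁) · Σ_{k=1}^{η₁} (2/k) = (1/(ρ_B-ρ_A)) ∫_{ρ_A}^{ρ_B} [2·log(1+m) + 2·log F_m(λ)] F_m(λ) dm holds for all λ ∈ [0,1). -/
/-!
For fixed `m` put `x = λ m / (1 + m)`, so that `λ^η G_m(η) = x^η / (1 + m)`. The Cauchy product of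
`-log (1 - x) = ∑ xⁿ / n` with `(1 - x)⁻¹ = ∑ xⁿ` is `∑ xⁿ Hₙ`, and `1 - x = (F_m(λ) (1 + m))⁻¹`
turns `2 (1 + m)⁻¹ (-log (1 - x)) / (1 - x)` into the integrand. The `η`-th term is bounded by
`2 η λ^η` uniformly in `m`, so by dominated convergence the sum over `η` commutes with the
integral over `m`.
-/

noncomputable def geomPMF (m : ℝ) (k : ℕ) : ℝ := (1 / (1 + m)) * (m / (1 + m)) ^ k

noncomputable def geomMGF (m l : ℝ) : ℝ := (1 + (1 - l) * m)⁻¹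

open Finset Real

-- The `k = 0` term is `x ^ 0 / 0 = 0`, so it drops out of the harmonic sum.
theorem sum_range_succ_pow_div_mul_pow (x : ℝ) (n : ℕ) :
    ∑ k ∈ range (n + 1), x ^ k / k * x ^ (n - k) = x ^ n * ∑ k ∈ Icc 1 n, (k : ℝ)⁻¹ := by
  rw [mul_sum, ← Finset.Ico_add_one_right_eq_Icc, sum_range_eq_add_Ico _ n.succ_pos]
  simp only [CharP.cast_eq_zero, div_zero, zero_mul, zero_add]
  refine sum_congr rfl fun k hk => ?_
  rw [div_mul_eq_mul_div, ← pow_add, Nat.add_sub_cancel' (Nat.lt_succ_iff.mp (mem_Ico.mp hk).2),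
    div_eq_mul_inv]

theorem hasSum_pow_div_log {x : ℝ} (hx : |x| < 1) :
    HasSum (fun n : ℕ => x ^ n / n) (-log (1 - x)) := by
  rw [← hasSum_nat_add_iff' 1]
  simpa using hasSum_pow_div_log_of_abs_lt_one hx

theorem hasSum_pow_mul_sum_inv {x : ℝ} (hx : |x| < 1) :
    HasSum (fun n : ℕ => x ^ n * ∑ k ∈ Icc 1 n, (k : ℝ)⁻¹) (-log (1 - x) / (1 - x)) := by
  have hgeom : Summable fun n : ℕ => ‖x ^ n‖ := by
    simpa [norm_pow] using summable_geometric_of_lt_one (abs_nonneg x) hx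
  have hlog : Summable fun n : ℕ => ‖x ^ n / n‖ :=
    hgeom.of_nonneg_of_le (fun _ => norm_nonneg _) fun n => by
      rcases n with _ | n
      · simp
      · rw [norm_div, Real.norm_natCast]
        exact div_le_self (norm_nonneg _) (by exact_mod_cast n.succ_pos)
  have := hasSum_sum_range_mul_of_summable_norm hlog hgeom
  rw [(hasSum_pow_div_log hx).tsum_eq, tsum_geometric_of_abs_lt_one hx, ← div_eq_mul_inv] at this
  simpa only [sum_range_succ_pow_div_mul_pow] using this

theorem sum_Icc_two_div_le (n : ℕ) : ∑ k ∈ Icc 1 n, 2 / (k : ℝ) ≤ 2 * n := by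
  calc ∑ k ∈ Icc 1 n, 2 / (k : ℝ) ≤ ∑ _k ∈ Icc 1 n, 2 :=
        sum_le_sum fun k hk => div_le_self zero_le_two (by exact_mod_cast (mem_Icc.mp hk).1)
    _ = 2 * n := by simp [mul_comm]

theorem sum_Icc_two_div_nonneg (n : ℕ) : 0 ≤ ∑ k ∈ Icc 1 n, 2 / (k : ℝ) :=
  sum_nonneg fun _ _ => by positivity

theorem geomPMF_nonneg {m : ℝ} (hm : 0 ≤ m) (k : ℕ) : 0 ≤ geomPMF m k := by
  unfold geomPMF; positivity

theorem geomPMF_le_one {m : ℝ} (hm : 0 ≤ m) (k : ℕ) : geomPMF m k ≤ 1 := by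
  have hle : ∀ a, a ≤ 1 + m → a / (1 + m) ≤ 1 := fun a ha => div_le_one_of_le₀ ha (by linarith)
  unfold geomPMF
  calc 1 / (1 + m) * (m / (1 + m)) ^ k ≤ 1 * 1 := by
        gcongr
        · exact hle 1 (by linarith)
        · exact pow_le_one₀ (by positivity) (hle m (by linarith))
    _ = 1 := one_mul 1

theorem measurable_geomPMF (k : ℕ) : Measurable fun m => geomPMF m k := by
  unfold geomPMF; fun_prop

theorem pow_mul_geomPMF (m l : ℝ) (k : ℕ) :
    l ^ k * geomPMF m k = (1 + m)⁻¹ * (l * m / (1 + m)) ^ k := by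
  rw [geomPMF, mul_div_assoc, mul_pow]; ring

theorem hasSum_pow_mul_geomPMF_mul_sum_two_div {m l : ℝ} (hm : 0 ≤ m) (hl : |l| < 1) :
    HasSum (fun k : ℕ => l ^ k * geomPMF m k * ∑ j ∈ Icc 1 k, 2 / (j : ℝ))
      ((2 * log (1 + m) + 2 * log (geomMGF m l)) * geomMGF m l) := by
  have hm1 : 0 < 1 + m := by linarith
  have hB : 0 < 1 + (1 - l) * m := by nlinarith [neg_abs_le l, le_abs_self l]
  have hx : |l * m / (1 + m)| < 1 := by
    rw [abs_div, abs_mul, abs_of_nonneg hm, abs_of_pos hm1, div_lt_one hm1]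
    nlinarith [abs_nonneg l]
  have h1x : 1 - l * m / (1 + m) = (1 + (1 - l) * m) / (1 + m) := by field_simp; ring
  have hvalue : (2 * log (1 + m) + 2 * log (geomMGF m l)) * geomMGF m l =
      2 / (1 + m) * (-log (1 - l * m / (1 + m)) / (1 - l * m / (1 + m))) := by
    rw [h1x, log_div hB.ne' hm1.ne', geomMGF, log_inv]
    field_simp
    ring
  rw [hvalue]
  refine ((hasSum_pow_mul_sum_inv hx).mul_left (2 / (1 + m))).congr_fun fun k => ?_
  rw [pow_mul_geomPMF]
  simp only [div_eq_mul_inv (2 : ℝ), ← mul_sum]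
  ring

theorem norm_pow_mul_geomPMF_mul_sum_two_div_le {m : ℝ} (hm : 0 ≤ m) (l : ℝ) (k : ℕ) :
    ‖l ^ k * geomPMF m k * ∑ j ∈ Icc 1 k, 2 / (j : ℝ)‖ ≤ 2 * k * |l| ^ k := by
  rw [norm_mul, norm_mul, norm_pow, Real.norm_eq_abs, Real.norm_of_nonneg (geomPMF_nonneg hm k),
    Real.norm_of_nonneg (sum_Icc_two_div_nonneg k)]
  calc |l| ^ k * geomPMF m k * ∑ j ∈ Icc 1 k, 2 / (j : ℝ) ≤ |l| ^ k * 1 * (2 * k) := by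
        gcongr
        · exact geomPMF_le_one hm k
        · exact sum_Icc_two_div_le k
    _ = 2 * k * |l| ^ k := by ring

theorem mixture_gen_fun_identity (ρA ρB : ℝ) (hA : 0 < ρA) (hAB : ρA < ρB)
    (μ : ℕ → ℝ) (hμ : ∀ η, μ η = (1 / (ρB - ρA)) * ∫ m in ρA..ρB, geomPMF m η)
    (l : ℝ) (hl0 : 0 ≤ l) (hl1 : l < 1) :
    ∑' η : ℕ, l ^ η * μ η * (∑ k ∈ Finset.Icc 1 η, 2 / (k : ℝ)) =
      (1 / (ρB - ρA)) *
        ∫ m in ρA..ρB, (2 * Real.log (1 + m) + 2 * Real.log (geomMGF m l)) * geomMGF m l := by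
  have hl : |l| < 1 := by rwa [abs_of_nonneg hl0]
  have hpos : ∀ m ∈ Set.uIoc ρA ρB, 0 ≤ m := fun m hm =>
    (hA.trans (Set.uIoc_of_le hAB.le ▸ hm).1).le
  have hbound : Summable fun k : ℕ => 2 * k * |l| ^ k := by
    have h : ‖|l|‖ < 1 := by rwa [Real.norm_eq_abs, abs_abs]
    simpa only [pow_one, mul_assoc] using (summable_pow_mul_geometric_of_norm_lt_one 1 h).mul_left 2
  have hsum := intervalIntegral.hasSum_integral_of_dominated_convergence
    (μ := MeasureTheory.volume) (F := fun k m => l ^ k * geomPMF m k * ∑ j ∈ Icc 1 k, 2 / (j : ℝ))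
    (fun k _ => 2 * k * |l| ^ k)
    (fun k => (((measurable_geomPMF k).const_mul _).mul_const _).aestronglyMeasurable)
    (fun k => .of_forall fun m hm => norm_pow_mul_geomPMF_mul_sum_two_div_le (hpos m hm) l k)
    (.of_forall fun _ _ => hbound) intervalIntegrable_const
    (.of_forall fun m hm => hasSum_pow_mul_geomPMF_mul_sum_two_div (hpos m hm) hl)
  rw [← (hsum.mul_left (1 / (ρB - ρA))).tsum_eq]
  refine tsum_congr fun k => ?_
  rw [hμ, intervalIntegral.integral_mul_const, intervalIntegral.integral_const_mul]
  ring
end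

section
/- Let 0 < ρ_A < ρ_B, N ≥ 1, and λ_1,...,λ_N ∈ [0,1). With F_m(λ) = (1+(1-λ)m)^{-1}, F_{m_0}(λ_1) := F_{ρ_A}(λ_1), F_{m_{N+1}}(λ_N) := F_{ρ_B}(λ_N), and O_N = {ρ_A ≤ m_1 ≤ ... ≤ m_N ≤ ρ_B}, it holds that Σ_{x=1}^N ∫_{O_N} [log F_{m_{x-1}}(λ_x) - 2·log F_{m_x}(λ_x) + log F_{m_{x+1}}(λ_x)] · Π_{y=1}^N F_{m_y}(λ_y) dm = 0. In fact each summand is zero. -/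
/-- Extension of a configuration `m : Fin N → ℝ` by the boundary values `a` at index `0`
and `b` at index `N+1`; index `i ∈ {1,…,N}` gives `m (i-1)`. -/
noncomputable def extSeq (a b : ℝ) (N : ℕ) (m : Fin N → ℝ) (i : ℕ) : ℝ :=
  if h : 1 ≤ i ∧ i ≤ N then m ⟨i - 1, by omega⟩ else if i = 0 then a else b

/-- The ordered simplex `{a ≤ m 0 ≤ … ≤ m (N-1) ≤ b}`. -/
def orderedSimplex (a b : ℝ) (N : ℕ) : Set (Fin N → ℝ) :=
  {m | Monotone m ∧ ∀ i, m i ∈ Set.Icc a b}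

/-!
Integrate the `x`-th summand first in `m_x`, the other coordinates being fixed (Fubini).
Then `m_x` ranges over `[m_{x-1}, m_{x+1}]`, the second difference of the logarithms equals
`2 f(m_x) - f(m_{x-1}) - f(m_{x+1})` with `f t = log (1 + (1 - λ_x) t)`, and the only factor
of the product depending on `m_x` is `F_{m_x}(λ_x) = f'(m_x) / (1 - λ_x)`. Since
`(2 f - f c - f d) f'` is the derivative of `f ^ 2 - (f c + f d) f`, which takes the value
`- f c * f d` at both ends of `[c, d]`, the inner integral vanishes.
-/

open MeasureTheory Set

theorem integral_two_mul_sub_mul_deriv_eq_zero {f f' : ℝ → ℝ} {c d : ℝ}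
    (hf : ∀ t ∈ uIcc c d, HasDerivAt f (f' t) t) (hf' : IntervalIntegrable f' volume c d) :
    ∫ t in c..d, (2 * f t - f c - f d) * f' t = 0 := by
  have hderiv : ∀ t ∈ uIcc c d,
      HasDerivAt (fun u => f u ^ 2 - (f c + f d) * f u) ((2 * f t - f c - f d) * f' t) t :=
    fun t ht => ((hf t ht).pow 2).sub ((hf t ht).const_mul _) |>.congr_deriv (by ring)
  have hcont : ContinuousOn (fun t => 2 * f t - f c - f d) (uIcc c d) :=
    ((continuousOn_const.mul fun t ht => (hf t ht).continuousAt.continuousWithinAt).sub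
      continuousOn_const).sub continuousOn_const
  rw [intervalIntegral.integral_eq_sub_of_hasDerivAt hderiv (hf'.continuousOn_mul hcont)]
  ring

theorem integral_log_geomMGF_second_difference_eq_zero {l c d : ℝ} (hl : l < 1)
    (hc : 0 < 1 + (1 - l) * c) (hcd : c ≤ d) :
    ∫ t in c..d, (Real.log (geomMGF c l) - 2 * Real.log (geomMGF t l) +
      Real.log (geomMGF d l)) * geomMGF t l = 0 := by
  have hs : 0 < 1 - l := by linarith
  have hpos : ∀ t ∈ uIcc c d, 0 < 1 + (1 - l) * t := fun t ht => by
    rw [uIcc_of_le hcd] at ht; nlinarith [ht.1]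
  set f : ℝ → ℝ := fun t => Real.log (1 + (1 - l) * t)
  have hf : ∀ t ∈ uIcc c d, HasDerivAt f ((1 - l) * geomMGF t l) t := fun t ht => by
    have := ((hasDerivAt_id t).const_mul (1 - l)).const_add 1 |>.log (hpos t ht).ne'
    exact this.congr_deriv (by simp [geomMGF, div_eq_mul_inv])
  have hf' : IntervalIntegrable (fun t => (1 - l) * geomMGF t l) volume c d :=
    (continuousOn_const.mul (ContinuousOn.inv₀ (by fun_prop) fun t ht => (hpos t ht).ne')
      ).intervalIntegrable
  have hlog : ∀ u, Real.log (geomMGF u l) = - f u := fun u => Real.log_inv _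
  calc _ = ∫ t in c..d, (1 - l)⁻¹ * ((2 * f t - f c - f d) * ((1 - l) * geomMGF t l)) := by
        refine intervalIntegral.integral_congr fun t _ => ?_
        simp only [hlog]
        field_simp
        ring
    _ = 0 := by
        rw [intervalIntegral.integral_const_mul,
          integral_two_mul_sub_mul_deriv_eq_zero hf hf', mul_zero]

theorem monotone_ite_insert_iff {α : Type*} [Preorder α] {f : ℕ → α} {k : ℕ} {t : α} :
    Monotone (fun w => if w ≤ k then f w else if w = k + 1 then t else f (w - 1)) ↔
      Monotone f ∧ f k ≤ t ∧ t ≤ f (k + 1) := by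
  constructor
  · intro h
    have hk : f k ≤ t := by simpa using h (Nat.le_succ k)
    have hk' : t ≤ f (k + 1) := by simpa using h (Nat.le_succ (k + 1))
    refine ⟨monotone_nat_of_le_succ fun w => ?_, hk, hk'⟩
    rcases lt_trichotomy w k with hw | rfl | hw
    · simpa [hw.le, Nat.succ_le_of_lt hw] using h (Nat.le_succ w)
    · exact hk.trans hk'
    · have := h (Nat.le_succ (w + 1))
      simp only at this
      rwa [if_neg (by omega), if_neg (by omega), if_neg (by omega), if_neg (by omega)] at this
  · rintro ⟨hf, hk, hk'⟩
    refine monotone_nat_of_le_succ fun w => ?_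
    split_ifs <;>
      first
        | omega
        | exact hf (by omega)
        | exact (hf (by omega : _ ≤ k)).trans hk
        | exact hk'.trans (hf (by omega : k + 1 ≤ _))

section extSeq

variable {a b : ℝ} {N : ℕ} {m : Fin N → ℝ}

@[simp]
theorem extSeq_zero : extSeq a b N m 0 = a := by
  simp [extSeq]

@[simp]
theorem extSeq_val_add_one (j : Fin N) : extSeq a b N m (j + 1) = m j := by
  simp [extSeq]

theorem continuous_extSeq (a b : ℝ) (N w : ℕ) :
    Continuous fun m : Fin N → ℝ => extSeq a b N m w := by
  unfold extSeq
  split_ifs <;> fun_prop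

theorem extSeq_mem_Icc (hm : m ∈ orderedSimplex a b N) (hab : a ≤ b) (w : ℕ) :
    extSeq a b N m w ∈ Icc a b := by
  unfold extSeq
  split_ifs
  exacts [hm.2 _, ⟨le_rfl, hab⟩, ⟨hab, le_rfl⟩]

theorem monotone_extSeq_iff :
    Monotone (extSeq a b N m) ↔ m ∈ orderedSimplex a b N ∧ a ≤ b := by
  have hb : extSeq a b N m (N + 1) = b := by simp [extSeq]
  constructor
  · intro h
    refine ⟨⟨fun p q hpq => ?_, fun j => ⟨?_, ?_⟩⟩, ?_⟩
    · simpa using h (Nat.add_le_add_right (Fin.le_def.1 hpq) 1)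
    · simpa using h (Nat.zero_le (j + 1))
    · simpa [hb] using h (Nat.add_le_add_right j.isLt.le 1)
    · simpa [hb] using h (Nat.zero_le (N + 1))
  · rintro ⟨hm, hab⟩
    refine monotone_nat_of_le_succ fun w => ?_
    unfold extSeq
    split_ifs <;>
      first
        | omega
        | contradiction
        | exact le_rfl
        | exact hab
        | exact (hm.2 _).1
        | exact (hm.2 _).2
        | (apply hm.1; rw [Fin.mk_le_mk]; omega)

theorem extSeq_insertNth {n : ℕ} (i : Fin (n + 1)) (t : ℝ) (y : Fin n → ℝ) :
    extSeq a b (n + 1) (i.insertNth t y) = fun w : ℕ =>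
      if w ≤ (i : ℕ) then extSeq a b n y w
      else if w = i + 1 then t else extSeq a b n y (w - 1) := by
  funext w
  unfold extSeq
  split_ifs <;> first | omega | rfl | skip
  · rw [Fin.insertNth_apply_below (by rw [Fin.lt_def]; dsimp only; omega), eq_rec_constant]
    rfl
  · rw [show (⟨w - 1, _⟩ : Fin (n + 1)) = i from Fin.ext (by dsimp only; omega),
      Fin.insertNth_apply_same]
  · rw [Fin.insertNth_apply_above (by rw [Fin.lt_def]; dsimp only; omega), eq_rec_constant]
    rfl

end extSeq

theorem insertNth_mem_orderedSimplex_iff {a b : ℝ} (hab : a ≤ b) {n : ℕ} (i : Fin (n + 1))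
    (t : ℝ) (y : Fin n → ℝ) :
    i.insertNth t y ∈ orderedSimplex a b (n + 1) ↔
      y ∈ orderedSimplex a b n ∧ t ∈ Icc (extSeq a b n y i) (extSeq a b n y (i + 1)) := by
  have h := monotone_extSeq_iff (a := a) (b := b) (m := i.insertNth t y)
  rw [extSeq_insertNth, monotone_ite_insert_iff, monotone_extSeq_iff] at h
  simp only [hab, and_true] at h
  exact h.symm

theorem isCompact_orderedSimplex (a b : ℝ) (N : ℕ) : IsCompact (orderedSimplex a b N) := by
  have hclosed : IsClosed (orderedSimplex a b N) := by
    simp only [orderedSimplex, Monotone, ofPred_and, ofPred_forall]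
    exact (isClosed_iInter fun p => isClosed_iInter fun q => isClosed_iInter fun _ =>
      isClosed_le (continuous_apply p) (continuous_apply q)).inter
      (isClosed_iInter fun j => isClosed_Icc.preimage (continuous_apply j))
  exact (isCompact_univ_pi fun _ => isCompact_Icc).of_isClosed_subset hclosed
    fun m hm => mem_univ_pi.2 hm.2

theorem prod_Icc_extSeq {M : Type*} [CommMonoid M] (a b : ℝ) {N : ℕ} (m : Fin N → ℝ)
    (φ : ℕ → ℝ → M) :
    ∏ w ∈ Finset.Icc 1 N, φ w (extSeq a b N m w) = ∏ j : Fin N, φ (j + 1) (m j) := by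
  rw [← Finset.Ico_add_one_right_eq_Icc, Finset.prod_Ico_eq_prod_range,
    ← Fin.prod_univ_eq_prod_range]
  simp [add_comm 1]

theorem integral_eq_integral_integral_insertNth {E : Type*} [NormedAddCommGroup E]
    [NormedSpace ℝ E] {n : ℕ} (i : Fin (n + 1)) {f : (Fin (n + 1) → ℝ) → E}
    (hf : Integrable f) :
    ∫ m, f m = ∫ y, ∫ t, f (i.insertNth t y) := by
  let e := MeasurableEquiv.piFinSuccAbove (fun _ : Fin (n + 1) => ℝ) i
  have he : MeasurePreserving e.symm volume volume :=
    (volume_preserving_piFinSuccAbove (fun _ : Fin (n + 1) => ℝ) i).symm _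
  have hfe : Integrable (f ∘ e.symm) (volume.prod volume) := by
    rw [← Measure.volume_eq_prod]
    exact (he.integrable_comp_emb e.symm.measurableEmbedding).2 hf
  rw [← he.integral_comp e.symm.measurableEmbedding, Measure.volume_eq_prod]
  exact integral_prod_symm _ hfe

noncomputable def stationarityIntegrand (a b : ℝ) (N : ℕ) (lam : ℕ → ℝ) (x : ℕ)
    (m : Fin N → ℝ) : ℝ :=
  (Real.log (geomMGF (extSeq a b N m (x - 1)) (lam x)) -
      2 * Real.log (geomMGF (extSeq a b N m x) (lam x)) +
      Real.log (geomMGF (extSeq a b N m (x + 1)) (lam x))) *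
    ∏ y ∈ Finset.Icc 1 N, geomMGF (extSeq a b N m y) (lam y)

section stationarityIntegrand

variable {a b : ℝ} {lam : ℕ → ℝ}

theorem stationarityIntegrand_insertNth {n : ℕ} (i : Fin (n + 1)) (t : ℝ) (y : Fin n → ℝ) :
    stationarityIntegrand a b (n + 1) lam (i + 1) (i.insertNth t y) =
      (Real.log (geomMGF (extSeq a b n y i) (lam (i + 1))) -
          2 * Real.log (geomMGF t (lam (i + 1))) +
          Real.log (geomMGF (extSeq a b n y (i + 1)) (lam (i + 1)))) *
        geomMGF t (lam (i + 1)) * ∏ k : Fin n, geomMGF (y k) (lam (i.succAbove k + 1)) := by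
  rw [stationarityIntegrand, prod_Icc_extSeq a b _ fun w u => geomMGF u (lam w),
    Fin.prod_univ_succAbove _ i]
  simp [extSeq_insertNth, mul_assoc]

theorem continuousOn_stationarityIntegrand (ha : 0 < a) (hab : a ≤ b) {N : ℕ}
    (hlam : ∀ w ∈ Finset.Icc 1 N, lam w < 1) {x : ℕ} (hx : x ∈ Finset.Icc 1 N) :
    ContinuousOn (stationarityIntegrand a b N lam x) (orderedSimplex a b N) := by
  have hg : ∀ w l, l < 1 →
      ContinuousOn (fun m => geomMGF (extSeq a b N m w) l) (orderedSimplex a b N) ∧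
        ∀ m ∈ orderedSimplex a b N, geomMGF (extSeq a b N m w) l ≠ 0 := by
    intro w l hl
    have hpos : ∀ m ∈ orderedSimplex a b N, 0 < 1 + (1 - l) * extSeq a b N m w :=
      fun m hm => by nlinarith [(extSeq_mem_Icc hm hab w).1]
    refine ⟨ContinuousOn.inv₀ ?_ fun m hm => (hpos m hm).ne', fun m hm => ?_⟩
    · exact (continuous_const.add
        (continuous_const.mul (continuous_extSeq a b N w))).continuousOn
    · exact inv_ne_zero (hpos m hm).ne'
  have hlog : ∀ w, ContinuousOn (fun m => Real.log (geomMGF (extSeq a b N m w) (lam x)))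
      (orderedSimplex a b N) := fun w =>
    (hg w _ (hlam x hx)).1.log (hg w _ (hlam x hx)).2
  exact (((hlog _).sub (continuousOn_const.mul (hlog _))).add (hlog _)).mul
    (continuousOn_finsetProd _ fun w hw => (hg w _ (hlam w hw)).1)

theorem integral_indicator_stationarityIntegrand_insertNth_eq_zero (ha : 0 < a) (hab : a ≤ b)
    {n : ℕ} (i : Fin (n + 1)) (hl : lam (i + 1) < 1) (y : Fin n → ℝ) :
    ∫ t, (orderedSimplex a b (n + 1)).indicator
      (stationarityIntegrand a b (n + 1) lam (i + 1)) (i.insertNth t y) = 0 := by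
  by_cases hy : y ∈ orderedSimplex a b n
  · set c := extSeq a b n y i
    set d := extSeq a b n y (i + 1)
    set C := ∏ k : Fin n, geomMGF (y k) (lam (i.succAbove k + 1))
    have hslice : ∀ t, (orderedSimplex a b (n + 1)).indicator
        (stationarityIntegrand a b (n + 1) lam (i + 1)) (i.insertNth t y) =
        (Icc c d).indicator (fun t => (Real.log (geomMGF c (lam (i + 1))) -
          2 * Real.log (geomMGF t (lam (i + 1))) + Real.log (geomMGF d (lam (i + 1)))) *
            geomMGF t (lam (i + 1)) * C) t := fun t => by
      simp only [indicator, insertNth_mem_orderedSimplex_iff hab, hy, true_and,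
        stationarityIntegrand_insertNth]
      rfl
    have hcd : c ≤ d := (monotone_extSeq_iff.2 ⟨hy, hab⟩) (Nat.le_succ _)
    have hc : 0 < 1 + (1 - lam (i + 1)) * c := by
      nlinarith [(extSeq_mem_Icc hy hab i).1]
    rw [funext hslice, integral_indicator measurableSet_Icc, integral_Icc_eq_integral_Ioc,
      ← intervalIntegral.integral_of_le hcd, intervalIntegral.integral_mul_const,
      integral_log_geomMGF_second_difference_eq_zero hl hc hcd, zero_mul]
  · refine integral_eq_zero_of_ae (Filter.Eventually.of_forall fun t => ?_)
    simp [indicator, insertNth_mem_orderedSimplex_iff hab, hy]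

theorem integral_stationarityIntegrand_eq_zero (ha : 0 < a) (hab : a ≤ b) {N : ℕ}
    (hlam : ∀ w ∈ Finset.Icc 1 N, lam w < 1) {x : ℕ} (hx : x ∈ Finset.Icc 1 N) :
    ∫ m in orderedSimplex a b N, stationarityIntegrand a b N lam x m = 0 := by
  have hint := (continuousOn_stationarityIntegrand ha hab hlam hx).integrableOn_compact
    (μ := volume) (isCompact_orderedSimplex a b N)
  have hS := (isCompact_orderedSimplex a b N).isClosed.measurableSet
  rw [Finset.mem_Icc] at hx
  obtain ⟨n, rfl⟩ : ∃ n, N = n + 1 := ⟨N - 1, by omega⟩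
  obtain ⟨i, rfl⟩ : ∃ i : Fin (n + 1), x = i + 1 :=
    ⟨⟨x - 1, by omega⟩, by dsimp only; omega⟩
  rw [← integral_indicator hS, integral_eq_integral_integral_insertNth i
    ((integrable_indicator_iff hS).2 hint)]
  simp only [integral_indicator_stationarityIntegrand_insertNth_eq_zero ha hab i
    (hlam _ (Finset.mem_Icc.2 hx)), integral_zero]

end stationarityIntegrand

theorem stationarity_sum_zero_general (ρA ρB : ℝ) (hA : 0 < ρA) (hAB : ρA < ρB)
    (N : ℕ) (lam : ℕ → ℝ)
    (hlam : ∀ x ∈ Finset.Icc 1 N, lam x ∈ Set.Ico (0 : ℝ) 1) :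
    (∑ x ∈ Finset.Icc 1 N,
      ∫ m in orderedSimplex ρA ρB N,
        (Real.log (geomMGF (extSeq ρA ρB N m (x - 1)) (lam x)) -
          2 * Real.log (geomMGF (extSeq ρA ρB N m x) (lam x)) +
          Real.log (geomMGF (extSeq ρA ρB N m (x + 1)) (lam x))) *
        ∏ y ∈ Finset.Icc 1 N, geomMGF (extSeq ρA ρB N m y) (lam y)) = 0 ∧
    ∀ x ∈ Finset.Icc 1 N,
      ∫ m in orderedSimplex ρA ρB N,
        (Real.log (geomMGF (extSeq ρA ρB N m (x - 1)) (lam x)) -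
          2 * Real.log (geomMGF (extSeq ρA ρB N m x) (lam x)) +
          Real.log (geomMGF (extSeq ρA ρB N m (x + 1)) (lam x))) *
        ∏ y ∈ Finset.Icc 1 N, geomMGF (extSeq ρA ρB N m y) (lam y) = 0 := by
  have hsummand : ∀ x ∈ Finset.Icc 1 N,
      ∫ m in orderedSimplex ρA ρB N, stationarityIntegrand ρA ρB N lam x m = 0 :=
    fun x hx => integral_stationarityIntegrand_eq_zero hA hAB.le (fun w hw => (hlam w hw).2) hx
  exact ⟨Finset.sum_eq_zero hsummand, hsummand⟩

theorem stationarity_sum_zero (ρA ρB : ℝ) (hA : 0 < ρA) (hAB : ρA < ρB)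
    (N : ℕ) (hN : 1 ≤ N) (lam : ℕ → ℝ)
    (hlam : ∀ x ∈ Finset.Icc 1 N, lam x ∈ Set.Ico (0 : ℝ) 1) :
    (∑ x ∈ Finset.Icc 1 N,
      ∫ m in orderedSimplex ρA ρB N,
        (Real.log (geomMGF (extSeq ρA ρB N m (x - 1)) (lam x)) -
          2 * Real.log (geomMGF (extSeq ρA ρB N m x) (lam x)) +
          Real.log (geomMGF (extSeq ρA ρB N m (x + 1)) (lam x))) *
        ∏ y ∈ Finset.Icc 1 N, geomMGF (extSeq ρA ρB N m y) (lam y)) = 0 ∧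
    ∀ x ∈ Finset.Icc 1 N,
      ∫ m in orderedSimplex ρA ρB N,
        (Real.log (geomMGF (extSeq ρA ρB N m (x - 1)) (lam x)) -
          2 * Real.log (geomMGF (extSeq ρA ρB N m x) (lam x)) +
          Real.log (geomMGF (extSeq ρA ρB N m (x + 1)) (lam x))) *
        ∏ y ∈ Finset.Icc 1 N, geomMGF (extSeq ρA ρB N m y) (lam y) = 0 :=
  stationarity_sum_zero_general ρA ρB hA hAB N lam hlam
end

section
/- Let 0 < T_A < T_B and t < 0, with F_m(t) = (1 - tm)^{-1}. Then ∫_{T_A}^{T_B} [log F_{T_A}(t) - 2·log F_m(t) + log F_{T_B}(t)] · F_m(t) dm = 0. -/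
noncomputable def expMGF (m t : ℝ) : ℝ := (1 - t * m)⁻¹

open Set

/-- Telescoping: `(G a + G b) * G - G ^ 2` is an antiderivative of the integrand, and it takes
the same value `G a * G b` at both endpoints. -/
theorem intervalIntegral.integral_telescoping_eq_zero {G G' : ℝ → ℝ} {a b : ℝ}
    (hG : ∀ x ∈ uIcc a b, HasDerivAt G (G' x) x) (hG' : ContinuousOn G' (uIcc a b)) :
    ∫ x in a..b, (G a - 2 * G x + G b) * G' x = 0 := by
  have hderiv : ∀ x ∈ uIcc a b,
      HasDerivAt (fun y => (G a + G b) * G y - G y ^ 2) ((G a - 2 * G x + G b) * G' x) x :=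
    fun x hx =>
      (((hG x hx).const_mul (G a + G b)).sub ((hG x hx).pow 2)).congr_deriv (by ring)
  have hGcont : ContinuousOn G (uIcc a b) := fun x hx => (hG x hx).continuousAt.continuousWithinAt
  have hint : IntervalIntegrable (fun x => (G a - 2 * G x + G b) * G' x) MeasureTheory.volume a b :=
    ((continuousOn_const.sub (continuousOn_const.mul hGcont)).add continuousOn_const).mul hG'
      |>.intervalIntegrable
  rw [integral_eq_sub_of_hasDerivAt hderiv hint]
  ring

theorem continuousAt_expMGF {m t : ℝ} (h : t * m ≠ 1) : ContinuousAt (fun m => expMGF m t) m :=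
  (continuousAt_const.sub (continuousAt_const.mul continuousAt_id)).inv₀ (sub_ne_zero.2 h.symm)

theorem hasDerivAt_log_expMGF {m t : ℝ} (h : t * m ≠ 1) :
    HasDerivAt (fun m => Real.log (expMGF m t)) (t * expMGF m t) m := by
  have hne : 1 - t * m ≠ 0 := sub_ne_zero.2 h.symm
  have hlin : HasDerivAt (fun m => 1 - t * m) (-t) m := by
    simpa using ((hasDerivAt_id m).const_mul t).const_sub 1
  simp only [expMGF, Real.log_inv]
  exact (hlin.log hne).neg.congr_deriv (by field_simp)

theorem single_site_stationarity_exp (TA TB : ℝ) (hA : 0 < TA) (hAB : TA < TB)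
    (t : ℝ) (ht : t < 0) :
    ∫ m in TA..TB,
      (Real.log (expMGF TA t) - 2 * Real.log (expMGF m t) + Real.log (expMGF TB t)) *
        expMGF m t = 0 := by
  have hsing : ∀ m ∈ uIcc TA TB, t * m ≠ 1 := by
    intro m hm
    rw [uIcc_of_le hAB.le] at hm
    exact (mul_neg_of_neg_of_pos ht (hA.trans_le hm.1)).trans zero_lt_one |>.ne
  have htele := intervalIntegral.integral_telescoping_eq_zero
    (fun m hm => hasDerivAt_log_expMGF (hsing m hm))
    (fun m hm => ((continuousAt_expMGF (hsing m hm)).const_mul t).continuousWithinAt)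
  simp only [mul_left_comm _ t, intervalIntegral.integral_const_mul] at htele
  exact (mul_eq_zero.1 htele).resolve_left ht.ne
end
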